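/- arXiv:2202.01388 — 3 statements merged into one kernel-verified Lean document; each statement's English description precedes it below -/
import Mathlib

section
/- Let M be a real symmetric N×N matrix, η > 0, and let v₁, …, v_k be orthonormal vectors such that applying Gram-Schmidt orthonormalization to (v₁ + ηMv₁, …, v_k + ηMv_k) returns (v₁, …, v_k) again. Then each v_i is an eigenvector of M. -/
/-!
Gram–Schmidt preserves the spans of initial segments, so if it returns `v` from
`v i + η • M v i` then `M v i ∈ span (v j : j ≤ i)`: the matrix of `M` in the orthonormal
family `v` is upper triangular. Being also symmetric, it is diagonal, i.e. each `v i` is an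
eigenvector.
-/

open Matrix Submodule InnerProductSpace

section

variable {𝕜 E ι : Type*} [RCLike 𝕜] [NormedAddCommGroup E] [InnerProductSpace 𝕜 E]

theorem Orthonormal.inner_eq_zero_of_mem_span_image {v : ι → E} (hv : Orthonormal 𝕜 v)
    {s : Set ι} {i : ι} (hi : i ∉ s) {x : E} (hx : x ∈ span 𝕜 (v '' s)) : ⟪x, v i⟫_𝕜 = 0 := by
  obtain ⟨l, hl, rfl⟩ := (Finsupp.mem_span_image_iff_linearCombination 𝕜).1 hx
  exact hv.inner_finsupp_eq_zero hi hl

theorem Orthonormal.eq_inner_smul_of_mem_span {v : ι → E} (hv : Orthonormal 𝕜 v) {i : ι}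
    {x : E} (hx : x ∈ span 𝕜 (Set.range v)) (horth : ∀ j ≠ i, ⟪v j, x⟫_𝕜 = 0) :
    x = ⟪v i, x⟫_𝕜 • v i := by
  rw [← Finsupp.range_linearCombination] at hx
  obtain ⟨l, rfl⟩ := hx
  have hl : l = Finsupp.single i (l i) := by
    ext j
    rcases eq_or_ne j i with rfl | hji
    · simp
    · rw [Finsupp.single_eq_of_ne hji, ← hv.inner_right_finsupp, horth j hji]
  rw [hv.inner_right_finsupp, hl, Finsupp.linearCombination_single, Finsupp.single_eq_same]

variable [LinearOrder ι]

theorem LinearMap.IsSymmetric.exists_eq_smul_of_mem_span_image_Iic {T : E →ₗ[𝕜] E}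
    (hT : T.IsSymmetric) {v : ι → E} (hv : Orthonormal 𝕜 v)
    (htri : ∀ i, T (v i) ∈ span 𝕜 (v '' Set.Iic i)) (i : ι) : ∃ μ : 𝕜, T (v i) = μ • v i := by
  refine ⟨_, hv.eq_inner_smul_of_mem_span (span_mono (Set.image_subset_range _ _) (htri i)) ?_⟩
  intro j hji
  rcases hji.lt_or_gt with hji | hij
  · rw [← hT]
    exact hv.inner_eq_zero_of_mem_span_image (by simpa using hji) (htri j)
  · rw [inner_eq_zero_symm]
    exact hv.inner_eq_zero_of_mem_span_image (by simpa using hij) (htri i)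

variable [LocallyFiniteOrderBot ι] [WellFoundedLT ι]

theorem mem_span_image_Iic_of_gramSchmidtNormed_eq {f v : ι → E}
    (h : gramSchmidtNormed 𝕜 f = v) (i : ι) : f i ∈ span 𝕜 (v '' Set.Iic i) := by
  rw [← h, span_gramSchmidtNormed, span_gramSchmidt_Iic]
  exact subset_span ⟨i, Set.mem_Iic.2 le_rfl, rfl⟩

theorem mem_span_image_Iic_of_gramSchmidtNormed_add_smul_eq {T : E →ₗ[𝕜] E} {v : ι → E}
    {η : 𝕜} (hη : η ≠ 0) (h : gramSchmidtNormed 𝕜 (fun i => v i + η • T (v i)) = v) (i : ι) :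
    T (v i) ∈ span 𝕜 (v '' Set.Iic i) := by
  have hw := mem_span_image_Iic_of_gramSchmidtNormed_eq h i
  have hv : v i ∈ span 𝕜 (v '' Set.Iic i) := subset_span ⟨i, Set.mem_Iic.2 le_rfl, rfl⟩
  have hT : T (v i) = η⁻¹ • ((v i + η • T (v i)) - v i) := by
    rw [add_sub_cancel_left, inv_smul_smul₀ hη]
  rw [hT]
  exact smul_mem _ _ (sub_mem hw hv)

end

theorem stmt_4 (N k : ℕ) (M : Matrix (Fin N) (Fin N) ℝ) (hM : M.IsSymm)
    (η : ℝ) (hη : 0 < η)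
    (v : Fin k → EuclideanSpace ℝ (Fin N))
    (hortho : Orthonormal ℝ v)
    (hfix : @InnerProductSpace.gramSchmidtNormed ℝ (EuclideanSpace ℝ (Fin N)) _ _ _ (Fin k) _ _
        (inferInstance : WellFoundedLT (Fin k))
        (fun i => v i + η • (WithLp.equiv 2 (Fin N → ℝ)).symm (M.mulVec (v i))) = v) :
    ∀ i, ∃ μ : ℝ, M.mulVec (v i) = μ • (v i : Fin N → ℝ) := by
  have hT : M.toEuclideanLin.IsSymmetric :=
    isSymmetric_toEuclideanLin_iff.mpr (isHermitian_iff_isSymm.mpr hM)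
  intro i
  obtain ⟨μ, hμ⟩ := hT.exists_eq_smul_of_mem_span_image_Iic hortho
    (mem_span_image_Iic_of_gramSchmidtNormed_add_smul_eq hη.ne' hfix) i
  exact ⟨μ, congrArg WithLp.ofLp hμ⟩
end

section
/- In the setting of the previous fixed-point lemma for Gram-Schmidt/Oja updates: the eigenvalue of M associated with v₂ equals (β₂ − 1)/η where β₂ = ‖v₂ + ηMv₂ − ((v₂ + ηMv₂)ᵀv₁)v₁‖, provided v₁ satisfies Mv₁ = ((β₁−1)/η)v₁ with β₁ = ‖v₁ + ηMv₁‖ and v₁ᵀv₂ = 0. -/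
open Matrix

theorem stmt_5 (N : ℕ) (M : Matrix (Fin N) (Fin N) ℝ) (hM : M.IsSymm)
    (η : ℝ) (hη : 0 < η) (v₁ v₂ : Fin N → ℝ)
    (hunit₁ : v₁ ⬝ᵥ v₁ = 1) (hunit₂ : v₂ ⬝ᵥ v₂ = 1) (horth : v₁ ⬝ᵥ v₂ = 0)
    (β₁ : ℝ) (hβ₁ : β₁ = Real.sqrt ((v₁ + η • M.mulVec v₁) ⬝ᵥ (v₁ + η • M.mulVec v₁)))
    (hv₁ : M.mulVec v₁ = ((β₁ - 1) / η) • v₁)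
    (w : Fin N → ℝ)
    (hw : w = v₂ + η • M.mulVec v₂ - ((v₂ + η • M.mulVec v₂) ⬝ᵥ v₁) • v₁)
    (β₂ : ℝ) (hβ₂ : β₂ = Real.sqrt (w ⬝ᵥ w))
    (hfix : β₂⁻¹ • w = v₂) :
    M.mulVec v₂ = ((β₂ - 1) / η) • v₂ := by
  -- β₂ ≠ 0
  have hβ₂ne : β₂ ≠ 0 := by
    intro h0
    rw [h0, _root_.inv_zero, zero_smul] at hfix
    rw [← hfix] at hunit₂
    simp [dotProduct] at hunit₂
  -- coefficient is zero
  have hc : (v₂ + η • M.mulVec v₂) ⬝ᵥ v₁ = 0 := by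
    have h1 : M.mulVec v₂ ⬝ᵥ v₁ = v₂ ⬝ᵥ M.mulVec v₁ := by
      rw [dotProduct_comm, Matrix.dotProduct_mulVec, ← Matrix.mulVec_transpose, hM.eq,
        dotProduct_comm]
    rw [add_dotProduct, smul_dotProduct, h1, hv₁, dotProduct_smul, dotProduct_comm v₂ v₁,
      horth]
    simp
  have hw' : w = v₂ + η • M.mulVec v₂ := by rw [hw, hc, zero_smul, sub_zero]
  have hwv : w = β₂ • v₂ := by
    rw [← hfix, smul_smul, mul_inv_cancel₀ hβ₂ne, one_smul]
  have key : η • M.mulVec v₂ = (β₂ - 1) • v₂ := by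
    have := hw'.symm.trans hwv
    rw [sub_smul, one_smul, ← this]
    abel
  have hηne : η ≠ 0 := ne_of_gt hη
  funext i
  have := congrFun key i
  simp only [Pi.smul_apply, smul_eq_mul] at this ⊢
  field_simp
  linarith [this]
end

section
/- Let M be real symmetric with distinct eigenvalues, and suppose (v₁,…,v_k) are orthonormal and each v_i is fixed (to first order in η) by the projected update with Gram-Schmidt constraint: Δv_i = Mv_i − (v_iᵀMv_i)v_i − Σ_{j<i}(v_iᵀMv_j)v_j = 0 for all i. Then each v_i is an eigenvector of M. -/
open Matrix

theorem stmt_17 (N k : ℕ) (M : Matrix (Fin N) (Fin N) ℝ) (hM : M.IsSymm)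
    (lam : Fin N → ℝ) (hlam : Function.Injective lam)
    (w : Fin N → Fin N → ℝ)
    (hw : ∀ i, w i ≠ 0 ∧ M.mulVec (w i) = lam i • w i)
    (v : Fin k → Fin N → ℝ)
    (hortho : ∀ i j, v i ⬝ᵥ v j = if i = j then (1 : ℝ) else 0)
    (hfix : ∀ i : Fin k,
      M.mulVec (v i) - (v i ⬝ᵥ M.mulVec (v i)) • v i -
        ∑ j ∈ Finset.univ.filter (· < i), (v i ⬝ᵥ M.mulVec (v j)) • v j = 0) :
    ∀ i, ∃ μ : ℝ, M.mulVec (v i) = μ • v i := by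
  intro i
  obtain ⟨n, hn⟩ : ∃ n, (i : ℕ) = n := ⟨_, rfl⟩
  induction n using Nat.strong_induction_on generalizing i with
  | _ n ih =>
    subst hn
    refine ⟨v i ⬝ᵥ M.mulVec (v i), ?_⟩
    have h := hfix i
    have hsum : ∑ j ∈ Finset.univ.filter (· < i), (v i ⬝ᵥ M.mulVec (v j)) • v j = 0 := by
      apply Finset.sum_eq_zero
      intro j hj
      have hji : j < i := by simpa using (Finset.mem_filter.mp hj).2
      obtain ⟨μ, hμ⟩ := ih j.val hji j rfl
      have hne : i ≠ j := (ne_of_lt hji).symm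
      have : v i ⬝ᵥ M.mulVec (v j) = 0 := by
        rw [hμ, dotProduct_smul, hortho, if_neg hne, smul_zero]
      rw [this, zero_smul]
    rw [hsum, sub_zero, sub_eq_zero] at h
    exact h
end
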